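/- Fix G₁₃ with 1/2 < G₁₃ ≤ 1. On the open interval G₂₃ ∈ (1 − G₁₃, G₁₃): (i) the function r₂₃(G₂₃) = G₁₃·(G₂₃ + 1 − G₁₃)/(G₂₃ + G₁₃ − 1) is strictly decreasing, with derivative −2G₁₃(1 − G₁₃)/(G₂₃ + G₁₃ − 1)² ≤ 0 and strictly negative when G₁₃ < 1; and (ii) the function r₁₃(G₂₃) = G₂₃·(G₁₃ + 1 − G₂₃)/(G₂₃ + G₁₃ − 1) is strictly decreasing. -/

import Mathlib

/-!
Writing `d = G₂₃ + G₁₃ - 1`, the two ratios decompose as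
`r₂₃ = G₁₃ + 2 G₁₃ (1 - G₁₃) / d` and `r₁₃ = r₂₃ + (G₁₃ - G₂₃)`.
On `d > 0` the first is a constant plus a nonnegative multiple of `1 / d`, hence antitone
(strictly so when `0 < G₁₃ < 1`), and the second adds the strictly decreasing `G₁₃ - G₂₃` to it.
-/

open Set

/-- `σ*₂ / σ*₃` as a function of `y = G₂₃`, where `c = G₁₃`. -/
noncomputable def shareRatio23 (c y : ℝ) : ℝ := c * (y + 1 - c) / (y + c - 1)

/-- `σ*₁ / σ*₃` as a function of `y = G₂₃`, where `c = G₁₃`. -/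
noncomputable def shareRatio13 (c y : ℝ) : ℝ := y * (c + 1 - y) / (y + c - 1)

section

variable {c k : ℝ}

lemma shareRatio23_eq_add_div {y : ℝ} (hy : y + c - 1 ≠ 0) :
    shareRatio23 c y = c + 2 * c * (1 - c) / (y + c - 1) := by
  unfold shareRatio23
  field_simp
  ring

lemma shareRatio13_eq_shareRatio23_add {y : ℝ} (hy : y + c - 1 ≠ 0) :
    shareRatio13 c y = shareRatio23 c y + (c - y) := by
  unfold shareRatio13 shareRatio23
  field_simp
  ring

lemma hasDerivAt_shareRatio23 {x : ℝ} (hx : x + c - 1 ≠ 0) :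
    HasDerivAt (shareRatio23 c) (-(2 * c * (1 - c)) / (x + c - 1) ^ 2) x := by
  have hnum : HasDerivAt (fun y => c * (y + 1 - c)) c x := by
    simpa [add_sub_assoc] using ((hasDerivAt_id x).add_const (1 - c)).const_mul c
  have hden : HasDerivAt (fun y => y + c - 1) 1 x := by
    simpa [add_sub_assoc] using (hasDerivAt_id x).add_const (c - 1)
  exact (hnum.div hden hx).congr_deriv (by ring)

lemma antitoneOn_div_add_sub (hk : 0 ≤ k) :
    AntitoneOn (fun y => k / (y + c - 1)) (Ioi (1 - c)) := by
  intro x (hx : 1 - c < x) y _ hxy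
  exact div_le_div_of_nonneg_left hk (by linarith) (by linarith)

lemma strictAntiOn_div_add_sub (hk : 0 < k) :
    StrictAntiOn (fun y => k / (y + c - 1)) (Ioi (1 - c)) := by
  intro x (hx : 1 - c < x) y _ hxy
  exact div_lt_div_of_pos_left hk (by linarith) (by linarith)

lemma eqOn_shareRatio23_add_div :
    EqOn (shareRatio23 c) (fun y => c + 2 * c * (1 - c) / (y + c - 1)) (Ioi (1 - c)) :=
  fun _ (hy : 1 - c < _) => shareRatio23_eq_add_div (by linarith)

lemma antitoneOn_shareRatio23 (hc₀ : 0 ≤ c) (hc₁ : c ≤ 1) :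
    AntitoneOn (shareRatio23 c) (Ioi (1 - c)) :=
  ((antitoneOn_div_add_sub (by positivity)).const_add c).congr eqOn_shareRatio23_add_div.symm

lemma strictAntiOn_shareRatio23 (hc₀ : 0 < c) (hc₁ : c < 1) :
    StrictAntiOn (shareRatio23 c) (Ioi (1 - c)) :=
  ((strictAntiOn_div_add_sub (by nlinarith)).const_add c).congr eqOn_shareRatio23_add_div.symm

lemma strictAntiOn_shareRatio13 (hc₀ : 0 ≤ c) (hc₁ : c ≤ 1) :
    StrictAntiOn (shareRatio13 c) (Ioi (1 - c)) := by
  have hsub : StrictAntiOn (fun y => c - y) (Ioi (1 - c)) := fun _ _ _ _ hxy => by linarith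
  refine ((antitoneOn_shareRatio23 hc₀ hc₁).add_strictAnti hsub).congr fun y (hy : 1 - c < y) => ?_
  exact (shareRatio13_eq_shareRatio23_add (by linarith)).symm

end

theorem statement_14 (g13 : ℝ) (h1 : 1 / 2 < g13) (h2 : g13 ≤ 1) :
    (∀ x ∈ Set.Ioo (1 - g13) g13,
      HasDerivAt (fun y : ℝ => g13 * (y + 1 - g13) / (y + g13 - 1))
        (-(2 * g13 * (1 - g13)) / (x + g13 - 1) ^ 2) x ∧
      -(2 * g13 * (1 - g13)) / (x + g13 - 1) ^ 2 ≤ 0 ∧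
      (g13 < 1 → -(2 * g13 * (1 - g13)) / (x + g13 - 1) ^ 2 < 0)) ∧
    (g13 < 1 →
      StrictAntiOn (fun y : ℝ => g13 * (y + 1 - g13) / (y + g13 - 1))
        (Set.Ioo (1 - g13) g13)) ∧
    StrictAntiOn (fun y : ℝ => y * (g13 + 1 - y) / (y + g13 - 1))
      (Set.Ioo (1 - g13) g13) := by
  have hc : 0 < g13 := by linarith
  refine ⟨fun x ⟨hx, _⟩ => ⟨?_, ?_, fun hlt => ?_⟩, fun hlt => ?_, ?_⟩
  · exact hasDerivAt_shareRatio23 (by linarith)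
  · exact div_nonpos_of_nonpos_of_nonneg (by nlinarith) (sq_nonneg _)
  · exact div_neg_of_neg_of_pos (by nlinarith) (pow_pos (by linarith) 2)
  · exact (strictAntiOn_shareRatio23 hc hlt).mono Ioo_subset_Ioi_self
  · exact (strictAntiOn_shareRatio13 hc.le h2).mono Ioo_subset_Ioi_self
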